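/- As formal power series in q and t: (−q²;q²)_∞ / (tq;q²)_∞ = Σ_{π ∈ DE} t^{n_o(π)} q^{|π|}, where DE is the set of partitions with distinct even parts (even parts do not repeat) and n_o(π) is the number of odd parts of π. -/

import Mathlib

open Finset

/-- The product (coefficient-wise convergence) topology on formal power series. -/
noncomputable instance : TopologicalSpace (MvPowerSeries (Fin 2) ℚ) :=
  inferInstanceAs (TopologicalSpace ((Fin 2 →₀ ℕ) → ℚ))

/-- The variable `q`. -/
noncomputable def q : MvPowerSeries (Fin 2) ℚ := MvPowerSeries.X 0

/-- The variable `t`. -/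
noncomputable def t : MvPowerSeries (Fin 2) ℚ := MvPowerSeries.X 1

/-- The finite q-Pochhammer symbol `(a; b)_n = ∏_{k=0}^{n-1} (1 - a b^k)`. -/
noncomputable def poch (a b : MvPowerSeries (Fin 2) ℚ) (n : ℕ) : MvPowerSeries (Fin 2) ℚ :=
  ∏ k ∈ range n, (1 - a * b ^ k)

/-- The infinite q-Pochhammer symbol `(a; b)_∞ = ∏_{k≥0} (1 - a b^k)`. -/
noncomputable def pochInf (a b : MvPowerSeries (Fin 2) ℚ) : MvPowerSeries (Fin 2) ℚ :=
  ∏' k : ℕ, (1 - a * b ^ k)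

/-- Partitions of `N` in which even parts do not repeat. -/
noncomputable def DE (N : ℕ) : Finset (Nat.Partition N) :=
  Finset.univ.filter fun p => ∀ i ∈ p.parts, Even i → p.parts.count i ≤ 1

/-- The number of odd parts of a partition. -/
noncomputable def oddCount {N : ℕ} (p : Nat.Partition N) : ℕ :=
  (p.parts.filter fun i => Odd i).card

/-
Mathlib's `Nat.Partition.genFun` turns a weight `f(i, c)` on parts `i` of multiplicity `c`
into the product over `m ≥ 1` of `1 + ∑_{j ≥ 1} f(m, j) q^{mj}`. Weighting odd parts by `t^c`
and allowing each even part at most once, the factor is the geometric series `(1 - t q^m)⁻¹`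
for odd `m` and `1 + q^m` for even `m`. Multiplying by `(tq;q²)_∞`, the product of the
factors `1 - t q^m` over odd `m`, leaves the product of the even factors, which is `(-q²;q²)_∞`.
-/

open PowerSeries
open scoped PowerSeries.WithPiTopology MvPowerSeries.WithPiTopology

instance : T2Space (MvPowerSeries (Fin 2) ℚ) := MvPowerSeries.WithPiTopology.instT2Space
instance : IsTopologicalRing (MvPowerSeries (Fin 2) ℚ) :=
  MvPowerSeries.WithPiTopology.instIsTopologicalRing _ _

theorem MvPowerSeries.continuous_finSuccEquiv_symm {R : Type*} [CommSemiring R]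
    [TopologicalSpace R] {n : ℕ} : Continuous (MvPowerSeries.finSuccEquiv R n).symm := by
  refine continuous_pi fun d => ?_
  have h (p : PowerSeries (MvPowerSeries (Fin n) R)) :
      MvPowerSeries.coeff d.tail (PowerSeries.coeff (d 0) p) =
        MvPowerSeries.coeff d ((MvPowerSeries.finSuccEquiv R n).symm p) := by
    conv_rhs => rw [← Finsupp.cons_tail d, ← MvPowerSeries.coeff_coeff_finSuccEquiv,
      AlgEquiv.apply_symm_apply]
  exact ((MvPowerSeries.WithPiTopology.continuous_coeff R _).comp
    (PowerSeries.WithPiTopology.continuous_coeff _ _)).congr h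

theorem MvPowerSeries.WithPiTopology.multipliable_one_sub_mul_pow {σ R : Type*} [CommRing R]
    [TopologicalSpace R] (a : MvPowerSeries σ R) {b : MvPowerSeries σ R}
    (hb : MvPowerSeries.constantCoeff b = 0) : Multipliable fun k => 1 - a * b ^ k := by
  simp_rw [sub_eq_add_neg]
  refine multipliable_one_add_of_tendsto_order_atTop_nhds_top ?_
  refine ENat.tendsto_nhds_top_iff_natCast_lt.mpr fun n => Filter.eventually_atTop.mpr
    ⟨n + 1, fun k hk => ?_⟩
  rw [MvPowerSeries.order_neg]
  calc (n : ℕ∞) < k := by exact_mod_cast hk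
    _ ≤ (b ^ k).order := MvPowerSeries.le_order_pow_of_constantCoeff_eq_zero k hb
    _ ≤ a.order + (b ^ k).order := le_add_self
    _ ≤ (a * b ^ k).order := MvPowerSeries.le_order_mul

theorem hasProd_ite_odd_succ_iff {M : Type*} [CommMonoid M] [TopologicalSpace M] {f : ℕ → M}
    {a : M} : HasProd (fun i => if Odd (i + 1) then f (i + 1) else 1) a ↔
      HasProd (fun k => f (2 * k + 1)) a := by
  rw [← Function.Injective.hasProd_iff (g := fun k => 2 * k) (mul_right_injective₀ two_ne_zero)]
  · simp [Function.comp_def, parity_simps]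
  · refine fun i hi => if_neg ?_
    rintro ⟨k, hk⟩
    exact hi ⟨k, show 2 * k = i by omega⟩

theorem hasProd_ite_even_succ_iff {M : Type*} [CommMonoid M] [TopologicalSpace M] {f : ℕ → M}
    {a : M} : HasProd (fun i => if Even (i + 1) then f (i + 1) else 1) a ↔
      HasProd (fun k => f (2 * k + 2)) a := by
  have hinj : Function.Injective fun k => 2 * k + 1 := fun _ _ h => by dsimp only at h; omega
  rw [← hinj.hasProd_iff]
  · simp [Function.comp_def, parity_simps]
  · refine fun i hi => if_neg ?_
    rintro ⟨k, hk⟩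
    exact hi ⟨k - 1, show 2 * (k - 1) + 1 = i by omega⟩

namespace DistinctEvens

open Nat.Partition (genFun)

/- The series are first built in `(ℚ⟦t⟧)⟦q⟧`, with `t = MvPowerSeries.X 0`, and then
transported to `ℚ⟦q, t⟧`; `toBivariate` sends `X ↦ q` and `C (X 0) ↦ t`. -/
noncomputable abbrev toBivariate :
    PowerSeries (MvPowerSeries (Fin 1) ℚ) ≃ₐ[ℚ] MvPowerSeries (Fin 2) ℚ :=
  (MvPowerSeries.finSuccEquiv ℚ 1).symm

/- `Nat.Partition.genFun` weighs a partition by the product of `partWeight i c` over its distinct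
parts `i`, where `c` is the multiplicity of `i`. -/
noncomputable def partWeight (i c : ℕ) : MvPowerSeries (Fin 1) ℚ :=
  if Even i then (if c ≤ 1 then 1 else 0) else MvPowerSeries.X 0 ^ c

theorem sum_count_not_even_eq_oddCount {n : ℕ} (p : n.Partition) :
    ∑ i ∈ p.parts.toFinset with ¬Even i, p.parts.count i = oddCount p := by
  rw [oddCount, ← Multiset.toFinset_sum_count_eq, Multiset.toFinset_filter]
  refine Finset.sum_congr (by simp only [Nat.not_even_iff_odd]) fun i hi => ?_
  exact (Multiset.count_filter_of_pos (Finset.mem_filter.mp hi).2).symm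

theorem prod_partWeight {n : ℕ} (p : n.Partition) :
    p.parts.toFinsupp.prod partWeight =
      if p ∈ DE n then MvPowerSeries.X 0 ^ oddCount p else 0 := by
  simp only [Finsupp.prod, Multiset.toFinsupp_support, Multiset.toFinsupp_apply]
  unfold partWeight
  rw [Finset.prod_ite, Finset.prod_boole, Finset.prod_pow_eq_pow_sum,
    sum_count_not_even_eq_oddCount]
  have hDE :
      (∀ i ∈ {i ∈ p.parts.toFinset | Even i}, p.parts.count i ≤ 1) ↔ p ∈ DE n := by
    simp [DE]
  simp only [hDE, ite_mul, one_mul, zero_mul]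

theorem coeff_genFun_partWeight (n : ℕ) :
    coeff n (genFun partWeight) = ∑ p ∈ DE n, MvPowerSeries.X 0 ^ oddCount p := by
  simp only [Nat.Partition.coeff_genFun, prod_partWeight, Finset.sum_ite_mem_eq]

noncomputable def genFunFactor (m : ℕ) : PowerSeries (MvPowerSeries (Fin 1) ℚ) :=
  1 + ∑' j, partWeight m (j + 1) • X ^ (m * (j + 1))

theorem genFunFactor_of_even {m : ℕ} (hm : Even m) : genFunFactor m = 1 + X ^ m := by
  rw [genFunFactor, tsum_eq_single 0 fun j hj => by simp [partWeight, hm, hj]]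
  simp [partWeight, hm]

theorem genFunFactor_mul_of_odd {m : ℕ} (hm : Odd m) :
    genFunFactor m * (1 - C (MvPowerSeries.X 0) * X ^ m) = 1 := by
  have hcc : constantCoeff (C (MvPowerSeries.X 0 : MvPowerSeries (Fin 1) ℚ) * X ^ m) = 0 := by
    simp [hm.pos.ne']
  have hterm (j : ℕ) :
      partWeight m (j + 1) • (X : PowerSeries (MvPowerSeries (Fin 1) ℚ)) ^ (m * (j + 1)) =
        (C (MvPowerSeries.X 0) * X ^ m) ^ (j + 1) := by
    rw [partWeight, if_neg (Nat.not_even_iff_odd.mpr hm), smul_eq_C_mul, mul_pow, map_pow, pow_mul]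
  have hgeom := (WithPiTopology.summable_pow_of_constantCoeff_eq_zero hcc).tsum_eq_zero_add
  rw [pow_zero] at hgeom
  rw [genFunFactor, funext hterm, ← hgeom]
  exact WithPiTopology.tsum_pow_mul_one_sub_of_constantCoeff_eq_zero hcc

theorem toBivariate_X : toBivariate X = q :=
  (AlgEquiv.symm_apply_eq _).mpr (MvPowerSeries.finSuccEquiv_X_zero (R := ℚ) (n := 1)).symm

theorem toBivariate_C_X : toBivariate (C (MvPowerSeries.X 0)) = t :=
  (AlgEquiv.symm_apply_eq _).mpr (MvPowerSeries.finSuccEquiv_X_succ (R := ℚ) 0).symm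

theorem hasSum_toBivariate_genFun :
    HasSum (fun N => ∑ p ∈ DE N, t ^ oddCount p * q ^ N)
      (toBivariate (genFun partWeight)) := by
  have h := (PowerSeries.hasSum_of_monomials_self (genFun partWeight)).map toBivariate
    MvPowerSeries.continuous_finSuccEquiv_symm
  have hterm (N : ℕ) : toBivariate (monomial N (coeff N (genFun partWeight))) =
      ∑ p ∈ DE N, t ^ oddCount p * q ^ N := by
    rw [coeff_genFun_partWeight, monomial_eq_C_mul_X_pow, map_mul, map_pow, toBivariate_X, map_sum,
      map_sum, Finset.sum_mul]
    simp only [map_pow, toBivariate_C_X]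
  rwa [Function.comp_def, funext hterm] at h

theorem hasProd_toBivariate_genFunFactor :
    HasProd (fun i => toBivariate (genFunFactor (i + 1))) (toBivariate (genFun partWeight)) :=
  (Nat.Partition.hasProd_genFun partWeight).map toBivariate
    MvPowerSeries.continuous_finSuccEquiv_symm

theorem toBivariate_genFunFactor_mul (m : ℕ) :
    toBivariate (genFunFactor m) * (if Odd m then 1 - t * q ^ m else 1) =
      if Even m then 1 + q ^ m else 1 := by
  rcases Nat.even_or_odd m with hm | hm
  · rw [if_neg (Nat.not_odd_iff_even.mpr hm), if_pos hm, mul_one, genFunFactor_of_even hm,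
      map_add, map_one, map_pow, toBivariate_X]
  · rw [if_pos hm, if_neg (Nat.not_even_iff_odd.mpr hm), ← toBivariate_X, ← toBivariate_C_X,
      ← map_pow, ← map_mul, ← map_one toBivariate, ← map_sub, ← map_mul,
      genFunFactor_mul_of_odd hm]

theorem hasProd_pochInf {a b : MvPowerSeries (Fin 2) ℚ} (hb : MvPowerSeries.constantCoeff b = 0) :
    HasProd (fun k => 1 - a * b ^ k) (pochInf a b) :=
  (MvPowerSeries.WithPiTopology.multipliable_one_sub_mul_pow a hb).hasProd

theorem constantCoeff_pochInf {a b : MvPowerSeries (Fin 2) ℚ}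
    (ha : MvPowerSeries.constantCoeff a = 0) (hb : MvPowerSeries.constantCoeff b = 0) :
    MvPowerSeries.constantCoeff (pochInf a b) = 1 := by
  have h := (hasProd_pochInf (a := a) hb).map MvPowerSeries.constantCoeff
    (MvPowerSeries.WithPiTopology.continuous_constantCoeff ℚ)
  simp only [Function.comp_def, map_sub, map_one, map_mul, ha, zero_mul, sub_zero] at h
  exact h.unique hasProd_one

theorem hasProd_oddFactor :
    HasProd (fun i => if Odd (i + 1) then 1 - t * q ^ (i + 1) else 1)
      (pochInf (t * q) (q ^ 2)) := by
  have h := hasProd_pochInf (a := t * q) (b := q ^ 2) (by simp [q])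
  rw [show (fun k => 1 - t * q * (q ^ 2) ^ k) = fun k => 1 - t * q ^ (2 * k + 1) from
    funext fun k => by ring] at h
  exact hasProd_ite_odd_succ_iff (f := fun m => 1 - t * q ^ m) |>.mpr h

theorem hasProd_evenFactor :
    HasProd (fun i => if Even (i + 1) then 1 + q ^ (i + 1) else 1)
      (pochInf (-(q ^ 2)) (q ^ 2)) := by
  have h := hasProd_pochInf (a := -(q ^ 2)) (b := q ^ 2) (by simp [q])
  rw [show (fun k => 1 - -(q ^ 2) * (q ^ 2) ^ k) = fun k => 1 + q ^ (2 * k + 2) from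
    funext fun k => by ring] at h
  exact hasProd_ite_even_succ_iff (f := fun m => 1 + q ^ m) |>.mpr h

theorem toBivariate_genFun_mul_pochInf :
    toBivariate (genFun partWeight) * pochInf (t * q) (q ^ 2) =
      pochInf (-(q ^ 2)) (q ^ 2) := by
  have h := hasProd_toBivariate_genFunFactor.mul hasProd_oddFactor
  rw [funext fun i => toBivariate_genFunFactor_mul (i + 1)] at h
  exact h.unique hasProd_evenFactor

end DistinctEvens

open DistinctEvens

/-- `(-q²;q²)_∞/(tq;q²)_∞` generates partitions with distinct even parts,
with `t` tracking the number of odd parts. -/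
theorem distinct_evens_generating_function :
    pochInf (-(q ^ 2)) (q ^ 2) * (pochInf (t * q) (q ^ 2))⁻¹
      = ∑' N : ℕ, ∑ p ∈ DE N, t ^ oddCount p * q ^ N := by
  have hunit : MvPowerSeries.constantCoeff (pochInf (t * q) (q ^ 2)) ≠ 0 := by
    rw [constantCoeff_pochInf (by simp [t, q]) (by simp [q])]
    exact one_ne_zero
  rw [hasSum_toBivariate_genFun.tsum_eq, ← toBivariate_genFun_mul_pochInf, mul_assoc,
    MvPowerSeries.mul_inv_cancel _ hunit, mul_one]
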